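/- Let n ≥ 7 be odd and let ν be the probability measure on the cyclic group ℤ_n with ν(1) = ν(−1) = 1/2 and ν(s) = 0 otherwise (the simple random walk on the circle). Then for every k ∈ ℕ, ‖ν^{⋆k} − π‖ ≥ (1/2) e^{−π² k / (2n²) − π⁴ k / (2n⁴)}. -/

import Mathlib

/-!
Write `n = 2m + 1` and test against the real part of the additive character
`ψ s = exp (2πi m s / n)`. It has modulus one and mean zero, so `|Re ψ̂(μ)| ≤ 2 ‖μ - π‖` for every
`μ`, while `ψ̂` turns convolution into multiplication:
`ψ̂(ν^{⋆k}) = ψ̂(ν)^k = (Re ψ 1)^k = (-cos (π/n))^k`.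
Finally `cos θ ≥ 1 - θ²/2 ≥ exp (-θ²/2 - θ⁴/2)` for `θ ≤ 1`.
-/

open Finset

/-- Convolution on a finite additive group: `(aconv μ ν) s = ∑ t, μ (s - t) * ν t`. -/
noncomputable def aconv {G : Type*} [AddGroup G] [Fintype G] (μ ν : G → ℝ) : G → ℝ :=
  fun s => ∑ t, μ (s - t) * ν t

/-- Convolution powers: `aconvPow ν 0 = δ_0`, `aconvPow ν (k+1) = aconv ν (aconvPow ν k)`. -/
noncomputable def aconvPow {G : Type*} [AddGroup G] [Fintype G] [DecidableEq G]
    (ν : G → ℝ) : ℕ → G → ℝ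
  | 0 => fun s => if s = 0 then 1 else 0
  | k + 1 => aconv ν (aconvPow ν k)

/-- Total variation distance. -/
noncomputable def tv {G : Type*} [Fintype G] (μ ν : G → ℝ) : ℝ :=
  (1 / 2) * ∑ s, |μ s - ν s|

theorem abs_sum_mul_sub_le_two_mul_tv {G : Type*} [Fintype G] (μ ρ f : G → ℝ)
    (hf : ∀ s, |f s| ≤ 1) : |∑ s, f s * (μ s - ρ s)| ≤ 2 * tv μ ρ := by
  calc |∑ s, f s * (μ s - ρ s)| ≤ ∑ s, |f s * (μ s - ρ s)| := abs_sum_le_sum_abs _ _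
    _ ≤ ∑ s, |μ s - ρ s| := by
      refine sum_le_sum fun s _ => ?_
      rw [abs_mul]
      exact mul_le_of_le_one_left (abs_nonneg _) (hf s)
    _ = 2 * tv μ ρ := by rw [tv]; ring

section Fourier

variable {G : Type*} [AddGroup G] [Fintype G]

theorem sum_addChar_mul_aconv (ψ : AddChar G ℂ) (μ ν : G → ℝ) :
    ∑ s, ψ s * aconv μ ν s = (∑ s, ψ s * μ s) * ∑ s, ψ s * ν s := by
  have hshift : ∀ t, ∑ s, ψ s * (μ (s - t) * ν t : ℂ) = (∑ u, ψ u * μ u) * (ψ t * ν t) := by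
    intro t
    rw [← Fintype.sum_equiv (Equiv.addRight t) (fun u => ψ (u + t) * (μ u * ν t : ℂ)) _
      (fun u => by simp), sum_mul]
    refine sum_congr rfl fun u _ => ?_
    rw [AddChar.map_add_eq_mul]
    ring
  simp only [aconv, Complex.ofReal_sum, Complex.ofReal_mul, mul_sum]
  rw [sum_comm]
  simp only [hshift, ← mul_sum]

theorem sum_addChar_mul_aconvPow [DecidableEq G] (ψ : AddChar G ℂ) (ν : G → ℝ) (k : ℕ) :
    ∑ s, ψ s * aconvPow ν k s = (∑ s, ψ s * ν s) ^ k := by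
  induction k with
  | zero => simp [aconvPow, apply_ite Complex.ofReal]
  | succ k ih => rw [aconvPow, sum_addChar_mul_aconv, ih, pow_succ']

theorem abs_re_sum_addChar_mul_le_two_mul_tv {ψ : AddChar G ℂ} (hψ : ψ ≠ 0) (μ : G → ℝ)
    (c : ℝ) : |(∑ s, ψ s * μ s).re| ≤ 2 * tv μ (fun _ => c) := by
  have hmean : ∑ s, (ψ s).re = 0 := by
    rw [← Complex.re_sum, AddChar.sum_eq_zero_iff_ne_zero.2 hψ, Complex.zero_re]
  have hbound : ∀ s, |(ψ s).re| ≤ 1 := fun s =>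
    (Complex.abs_re_le_norm _).trans (ψ.norm_apply s).le
  convert abs_sum_mul_sub_le_two_mul_tv μ (fun _ => c) _ hbound using 2
  simp only [Complex.re_sum, Complex.re_mul_ofReal, mul_sub, sum_sub_distrib, ← sum_mul,
    hmean, zero_mul, sub_zero]

end Fourier

theorem sum_addChar_mul_symmetricStep {G : Type*} [AddCommGroup G] [Fintype G] [DecidableEq G]
    (ψ : AddChar G ℂ) {g : G} (hg : g ≠ -g) :
    ∑ s, ψ s * ((if s = g ∨ s = -g then (1 / 2 : ℝ) else 0 : ℝ) : ℂ) = (ψ g).re := by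
  rw [Fintype.sum_eq_add g (-g) hg (fun s hs => by simp [hs.1, hs.2]), if_pos (Or.inl rfl),
    if_pos (Or.inr rfl), ψ.map_neg_eq_conj, Complex.re_eq_add_conj]
  push_cast
  ring

theorem exp_neg_sq_div_two_sub_pow_four_div_two_le_cos {x : ℝ} (hx : x ^ 2 ≤ 1) :
    Real.exp (-(x ^ 2 / 2) - x ^ 4 / 2) ≤ Real.cos x := by
  set y := x ^ 2 / 2 with hy
  have hy0 : 0 ≤ y := by positivity
  have hy1 : y ≤ 1 / 2 := by linarith
  have hexp : Real.exp (-(y + 2 * y ^ 2)) * (1 + y + 2 * y ^ 2) ≤ 1 := by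
    rw [Real.exp_neg, inv_mul_le_iff₀ (Real.exp_pos _)]
    linarith [Real.add_one_le_exp (y + 2 * y ^ 2)]
  -- `(1 - y) (1 + y + 2y²) = 1 + y² (1 - 2y) ≥ 1`
  have hpoly : 1 ≤ (1 - y) * (1 + y + 2 * y ^ 2) := by nlinarith [sq_nonneg y]
  calc Real.exp (-(x ^ 2 / 2) - x ^ 4 / 2) = Real.exp (-(y + 2 * y ^ 2)) := by
        rw [hy]; ring_nf
    _ ≤ 1 - y := by nlinarith [Real.exp_pos (-(y + 2 * y ^ 2))]
    _ ≤ Real.cos x := Real.one_sub_sq_div_two_le_cos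

theorem re_stdAddChar_mulShift_one {n m : ℕ} [NeZero n] (hnm : n = 2 * m + 1) :
    ((ZMod.stdAddChar (N := n)).mulShift m 1).re = -Real.cos (Real.pi / n) := by
  have hangle : 2 * Real.pi * m / n = Real.pi - Real.pi / n := by
    have hn : (n : ℝ) = 2 * m + 1 := by exact_mod_cast hnm
    rw [hn]
    field_simp
    ring
  rw [AddChar.mulShift_apply, mul_one, ← Int.cast_natCast, ZMod.stdAddChar_coe, Int.cast_natCast,
    ← Real.cos_pi_sub, ← hangle, ← Complex.exp_ofReal_mul_I_re]
  push_cast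
  ring_nf

/-- lower bound for the simple random walk on the circle `ℤ_n`, `n ≥ 7` odd:
for every `k`, `‖ν^{⋆k} − π‖ ≥ (1/2) e^{−π²k/(2n²) − π⁴k/(2n⁴)}`. -/
theorem simple_walk_circle_lower_bound
    (n : ℕ) [NeZero n] (hn : 7 ≤ n) (hodd : Odd n)
    (ν : ZMod n → ℝ)
    (hν : ν = fun s => if s = 1 ∨ s = -1 then (1 / 2 : ℝ) else 0)
    (k : ℕ) :
    (1 / 2) * Real.exp (-(Real.pi ^ 2 * k) / (2 * (n : ℝ) ^ 2)
        - Real.pi ^ 4 * k / (2 * (n : ℝ) ^ 4))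
      ≤ tv (aconvPow ν k) (fun _ => 1 / (n : ℝ)) := by
  obtain ⟨m, hm⟩ := hodd
  set θ := Real.pi / n with hθ
  have hn' : (7 : ℝ) ≤ n := by exact_mod_cast hn
  have hθ_pos : 0 < θ := by positivity
  have hθ_le : θ ≤ 1 / 2 := by
    rw [div_le_iff₀ (by positivity)]
    linarith [Real.pi_lt_d2]
  have hcos : 0 < Real.cos θ :=
    Real.cos_pos_of_mem_Ioo ⟨by linarith [Real.pi_pos], by linarith [Real.pi_gt_three]⟩
  let ψ := (ZMod.stdAddChar (N := n)).mulShift m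
  have hψ1 : (ψ 1).re = -Real.cos θ := re_stdAddChar_mulShift_one hm
  have hψ : ψ ≠ 0 := AddChar.ne_zero_iff.2 ⟨1, fun h => by simp [h] at hψ1; linarith⟩
  have : Fact (2 < n) := ⟨by omega⟩
  have hstep : ∑ s, ψ s * ν s = ((-Real.cos θ : ℝ) : ℂ) := by
    rw [hν, ← hψ1]
    exact sum_addChar_mul_symmetricStep ψ ZMod.neg_one_ne_one.symm
  have htest := abs_re_sum_addChar_mul_le_two_mul_tv hψ (aconvPow ν k) (1 / n)
  rw [sum_addChar_mul_aconvPow, hstep, ← Complex.ofReal_pow, Complex.ofReal_re, abs_pow,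
    abs_neg, abs_of_pos hcos] at htest
  have hexponent : -(Real.pi ^ 2 * k) / (2 * (n : ℝ) ^ 2) - Real.pi ^ 4 * k / (2 * (n : ℝ) ^ 4)
      = k * (-(θ ^ 2 / 2) - θ ^ 4 / 2) := by
    rw [hθ]; field_simp
  have hexp : Real.exp (-(θ ^ 2 / 2) - θ ^ 4 / 2) ≤ Real.cos θ :=
    exp_neg_sq_div_two_sub_pow_four_div_two_le_cos (by nlinarith)
  rw [hexponent, Real.exp_nat_mul]
  linarith [pow_le_pow_left₀ (Real.exp_nonneg _) hexp k]
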